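/- Let G be a finite simple undirected graph, let (s_1,t_1),…,(s_r,t_r) be pairs of vertices of G, and let p ∈ ℕ. Let G' be the graph obtained from G by adding, for each i ∈ [r], two new vertices s_i' and t_i', together with p+1 new paths of length two from s_i' to s_i whose middle vertices are new and pairwise distinct, and p+1 new paths of length two from t_i' to t_i whose middle vertices are new and pairwise distinct. Then G has a multicut of size at most p for the cut requests {{s_i,t_i} : i ∈ [r]} if and only if G' has a multicut of size at most p for the cut requests {{s_i',t_i'} : i ∈ [r]}. -/

import Mathlib

/-!
If `X` separates every `s_i` from `t_i` in `G`, its copy in `G'` separates every `s_i'` from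
`t_i'`: collapsing each new vertex onto the vertex `s_i` or `t_i` it hangs from sends walks of
`G' - X` to walks of `G - X`. Conversely, at most `p` deleted edges cannot hit all `p + 1`
paths of length two from `s_i'` to `s_i` (or from `t_i'` to `t_i`), so for a multicut `X'` of
`G'` the edges of `G` lying in `X'` already separate each `s_i` from `t_i`.
-/

open Finset

variable {V : Type}

/-- Total capacity of a terminal set: sum of degrees. -/
def capacity [Fintype V] (G : SimpleGraph V) [DecidableRel G.Adj] (T : Finset V) : ℕ :=
  ∑ t ∈ T, G.degree t

/-- `P` is a partition of the set `T` into nonempty parts. -/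
def IsPartitionOn (T : Set V) (P : Set (Set V)) : Prop :=
  (∀ p ∈ P, p.Nonempty ∧ p ⊆ T) ∧ ∀ t ∈ T, ∃! p, p ∈ P ∧ t ∈ p

/-- `X` is a multiway cut for the partition `P` in `G`: no component of `G - X`
contains terminals from two distinct parts. -/
def IsMultiwayCut (G : SimpleGraph V) (P : Set (Set V)) (X : Finset (Sym2 V)) : Prop :=
  ↑X ⊆ G.edgeSet ∧ ∀ u v : V, ∀ p ∈ P, ∀ q ∈ P, u ∈ p → v ∈ q →
    (G.deleteEdges ↑X).Reachable u v → p = q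

def IsMinMultiwayCut (G : SimpleGraph V) (P : Set (Set V)) (X : Finset (Sym2 V)) : Prop :=
  IsMultiwayCut G P X ∧ ∀ Y : Finset (Sym2 V), IsMultiwayCut G P Y → X.card ≤ Y.card

/-- `R` is a set of cut requests over `T`: unordered pairs of distinct terminals. -/
def CutRequests (T : Set V) (R : Set (Sym2 V)) : Prop :=
  ∀ r ∈ R, ¬ r.IsDiag ∧ ∀ v ∈ r, v ∈ T

/-- `X` is a multicut for the requests `R` in `G`. -/
def IsMulticut (G : SimpleGraph V) (R : Set (Sym2 V)) (X : Finset (Sym2 V)) : Prop :=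
  ↑X ⊆ G.edgeSet ∧ ∀ u v : V, s(u, v) ∈ R → ¬ (G.deleteEdges ↑X).Reachable u v

def IsMinMulticut (G : SimpleGraph V) (R : Set (Sym2 V)) (X : Finset (Sym2 V)) : Prop :=
  IsMulticut G R X ∧ ∀ Y : Finset (Sym2 V), IsMulticut G R Y → X.card ≤ Y.card

/-- An edge is essential for `(G,T)` if for some set of cut requests over `T`,
every minimum multicut contains it. -/
def Essential (G : SimpleGraph V) (T : Set V) (e : Sym2 V) : Prop :=
  ∃ R : Set (Sym2 V), CutRequests T R ∧ ∀ X : Finset (Sym2 V), IsMinMulticut G R X → e ∈ X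

/-- The edge boundary of `S`: edges with exactly one endpoint in `S`. -/
def edgeBoundary [Fintype V] [DecidableEq V] (G : SimpleGraph V) [DecidableRel G.Adj]
    (S : Finset V) : Finset (Sym2 V) :=
  G.edgeFinset.filter (fun e => ∃ u v : V, e = s(u, v) ∧ u ∈ S ∧ v ∉ S)

/-- `cap_T(S) = cap_G(T ∩ S) + δ_G(S)`. -/
def capT [Fintype V] [DecidableEq V] (G : SimpleGraph V) [DecidableRel G.Adj]
    (T S : Finset V) : ℕ :=
  capacity G (T ∩ S) + (edgeBoundary G S).card

/-- `X` is an `(A,B)`-edge cut in `G`. -/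
def IsEdgeCut (G : SimpleGraph V) (A B : Finset V) (X : Finset (Sym2 V)) : Prop :=
  ↑X ⊆ G.edgeSet ∧ ∀ a ∈ A, ∀ b ∈ B, ¬ (G.deleteEdges ↑X).Reachable a b

def IsMinEdgeCut (G : SimpleGraph V) (A B : Finset V) (X : Finset (Sym2 V)) : Prop :=
  IsEdgeCut G A B X ∧ ∀ Y : Finset (Sym2 V), IsEdgeCut G A B Y → X.card ≤ Y.card


/-- The closed neighborhood `N_G[S]`. -/
def closedNbhd (G : SimpleGraph V) (S : Set V) : Set V :=
  S ∪ {v | ∃ u ∈ S, G.Adj u v}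

/-- The (exterior) open neighborhood `N_G(S)`. -/
def extNbhd [Fintype V] [DecidableEq V] (G : SimpleGraph V) [DecidableRel G.Adj]
    (S : Finset V) : Finset V :=
  Finset.univ.filter (fun v => v ∉ S ∧ ∃ u ∈ S, G.Adj u v)

/-- The graph `G_S`: the edges of `G` with at least one endpoint in `S`
(vertices outside `N_G[S]` are isolated). -/
def recGraph [DecidableEq V] (G : SimpleGraph V) (S : Finset V) : SimpleGraph V where
  Adj u v := G.Adj u v ∧ (u ∈ S ∨ v ∈ S)
  symm := by constructor; intro u v h; exact ⟨h.1.symm, h.2.symm⟩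
  loopless := by constructor; intro v h; exact G.irrefl h.1

instance [DecidableEq V] (G : SimpleGraph V) [DecidableRel G.Adj] (S : Finset V) :
    DecidableRel (recGraph G S).Adj :=
  fun u v => inferInstanceAs (Decidable (G.Adj u v ∧ (u ∈ S ∨ v ∈ S)))

/-- The terminal set `T(S) = (T ∩ S) ∪ N_G(S)` of the recursive instance at `S`. -/
def recTerminals [Fintype V] [DecidableEq V] (G : SimpleGraph V) [DecidableRel G.Adj]
    (T S : Finset V) : Finset V :=
  (T ∩ S) ∪ extNbhd G S

/-- An indexed partition `T = T_1 ∪ ... ∪ T_s` of `T` into nonempty disjoint parts. -/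
def IsIndexedPartition [DecidableEq V] (T : Finset V) {s : ℕ} (Tp : Fin s → Finset V) : Prop :=
  (∀ i, (Tp i).Nonempty) ∧ (∀ i j, i ≠ j → Disjoint (Tp i) (Tp j)) ∧
    Finset.univ.biUnion Tp = T

def IsMultiwayCutFam (G : SimpleGraph V) {s : ℕ} (Tp : Fin s → Finset V)
    (X : Finset (Sym2 V)) : Prop :=
  ↑X ⊆ G.edgeSet ∧ ∀ i j : Fin s, i ≠ j → ∀ u ∈ Tp i, ∀ v ∈ Tp j,
    ¬ (G.deleteEdges ↑X).Reachable u v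

/-- The set `E(T,V)` of edges incident to at least one terminal. -/
def terminalEdges [Fintype V] [DecidableEq V] (G : SimpleGraph V) [DecidableRel G.Adj]
    (T : Finset V) : Finset (Sym2 V) :=
  G.edgeFinset.filter (fun e => ∃ t ∈ T, t ∈ e)

/-- Independence of the columns indexed by the finite set `X` in the
linear representation `v`. -/
def FIndep (F : Type) [Field F] {W E : Type} [AddCommGroup W] [Module F W]
    (v : E → W) (X : Finset E) : Prop :=
  LinearIndependent F (fun x : {a // a ∈ X} => v x.1)


/-- The auxiliary vertex type for the multicut gadget: original vertices, the new
terminals `s_i'`/`t_i'` (indexed by `Fin r × Bool`), and the `p+1` middle vertices of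
the new length-two paths on each side. -/
abbrev GadgetV (V : Type) (r p : ℕ) : Type :=
  V ⊕ ((Fin r × Bool) ⊕ (Fin r × Bool × Fin (p + 1)))

/-- The gadget graph `G'`: `G` together with, for each `i` and each side
`b : Bool` (`false` for `s_i`, `true` for `t_i`), `p+1` internally disjoint paths of
length two from the new terminal `(i,b)` through a middle vertex `(i,b,j)` to the
original vertex (`s_i` or `t_i`). -/
def gadgetGraph (G : SimpleGraph V) (r p : ℕ) (sv tv : Fin r → V) :
    SimpleGraph (GadgetV V r p) :=
  SimpleGraph.fromRel (fun a b =>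
    (∃ u w : V, a = Sum.inl u ∧ b = Sum.inl w ∧ G.Adj u w) ∨
    (∃ (i : Fin r) (c : Bool) (j : Fin (p + 1)),
      a = Sum.inr (Sum.inr (i, c, j)) ∧ b = Sum.inr (Sum.inl (i, c))) ∨
    (∃ (i : Fin r) (c : Bool) (j : Fin (p + 1)),
      a = Sum.inr (Sum.inr (i, c, j)) ∧ b = Sum.inl (if c then tv i else sv i)))

open Function SimpleGraph

theorem Finset.exists_disjoint_of_card_lt {ι α : Type*} [Fintype ι] {A : ι → Set α}
    (hA : Pairwise (Disjoint on A)) {X : Finset α} (hX : X.card < Fintype.card ι) :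
    ∃ j, Disjoint (A j) X := by
  by_contra! hmeet
  choose x hxA hxX using fun j => Set.not_disjoint_iff.1 (hmeet j)
  have hx : Injective x := fun j j' hjj' =>
    hA.eq (Set.not_disjoint_iff.2 ⟨x j, hxA j, hjj' ▸ hxA j'⟩)
  have hcard := card_le_card_of_injOn (s := univ) x (fun j _ => hxX j) hx.injOn
  rw [card_univ] at hcard
  omega

namespace SimpleGraph

variable {α β : Type*}

theorem Reachable.lift {G : SimpleGraph α} {H : SimpleGraph β} (f : α → β)
    (hf : ∀ a b, G.Adj a b → H.Reachable (f a) (f b)) {a b : α} (h : G.Reachable a b) :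
    H.Reachable (f a) (f b) := by
  rw [reachable_iff_reflTransGen] at h ⊢
  exact Relation.ReflTransGen.lift' f
    (fun a b hab => (reachable_iff_reflTransGen _ _).1 (hf a b hab)) _ _ h

theorem reachable_deleteEdges_of_card_lt_commonNeighbors {ι : Type*} [Fintype ι]
    {G : SimpleGraph α} {u v : α} {w : ι → α} (hw : Injective w) (hu : ∀ j, G.Adj u (w j))
    (hv : ∀ j, G.Adj (w j) v) {X : Finset (Sym2 α)} (hX : X.card < Fintype.card ι) :
    (G.deleteEdges X).Reachable u v := by
  have hdisj : Pairwise (Disjoint on fun j => ({s(u, w j), s(w j, v)} : Set (Sym2 α))) := by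
    intro j j' hjj'
    simp only [onFun, Set.disjoint_insert_left, Set.disjoint_singleton_left, Set.mem_insert_iff,
      Set.mem_singleton_iff, Sym2.eq_iff]
    grind [hw.ne hjj', (hu j).ne, (hu j').ne, (hv j).ne, (hv j').ne]
  obtain ⟨j, hj⟩ := Finset.exists_disjoint_of_card_lt hdisj hX
  have hleft : s(u, w j) ∉ (X : Set (Sym2 α)) := Set.disjoint_left.1 hj (by simp)
  have hright : s(w j, v) ∉ (X : Set (Sym2 α)) := Set.disjoint_left.1 hj (by simp)
  exact (deleteEdges_adj.2 ⟨hu j, hleft⟩).reachable.trans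
    (deleteEdges_adj.2 ⟨hv j, hright⟩).reachable

end SimpleGraph

def gadgetProj {r p : ℕ} (sv tv : Fin r → V) : GadgetV V r p → V
  | .inl u => u
  | .inr (.inl (i, c)) => if c then tv i else sv i
  | .inr (.inr (i, c, _)) => if c then tv i else sv i

namespace gadgetGraph

variable {G : SimpleGraph V} {r p : ℕ} {sv tv : Fin r → V}

theorem adj_inl_inl {u w : V} :
    (gadgetGraph G r p sv tv).Adj (.inl u) (.inl w) ↔ G.Adj u w := by
  simp only [gadgetGraph, fromRel_adj, ne_eq, Sum.inl.injEq]
  grind [G.adj_comm w u, Adj.ne]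

theorem adj_terminal_middle (i : Fin r) (c : Bool) (j : Fin (p + 1)) :
    (gadgetGraph G r p sv tv).Adj (.inr (.inl (i, c))) (.inr (.inr (i, c, j))) := by
  rw [gadgetGraph, fromRel_adj]
  exact ⟨by simp, Or.inr (Or.inr (Or.inl ⟨i, c, j, rfl, rfl⟩))⟩

theorem adj_middle_attachment (i : Fin r) (c : Bool) (j : Fin (p + 1)) :
    (gadgetGraph G r p sv tv).Adj (.inr (.inr (i, c, j))) (.inl (if c then tv i else sv i)) := by
  rw [gadgetGraph, fromRel_adj]
  exact ⟨by simp, Or.inl (Or.inr (Or.inr ⟨i, c, j, rfl, rfl⟩))⟩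

theorem map_inl_mem_edgeSet {e : Sym2 V} :
    Sym2.map Sum.inl e ∈ (gadgetGraph G r p sv tv).edgeSet ↔ e ∈ G.edgeSet := by
  induction e with
  | h u w => exact adj_inl_inl

theorem eq_inl_inl_or_gadgetProj_eq_of_adj {a b : GadgetV V r p}
    (hab : (gadgetGraph G r p sv tv).Adj a b) :
    (∃ u w, a = .inl u ∧ b = .inl w) ∨ gadgetProj sv tv a = gadgetProj sv tv b := by
  rw [gadgetGraph, fromRel_adj] at hab
  rcases hab with ⟨-, (⟨u, w, rfl, rfl, -⟩ | ⟨i, c, j, rfl, rfl⟩ | ⟨i, c, j, rfl, rfl⟩) |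
      (⟨u, w, rfl, rfl, -⟩ | ⟨i, c, j, rfl, rfl⟩ | ⟨i, c, j, rfl, rfl⟩)⟩ <;>
    simp [gadgetProj]

theorem reachable_gadgetProj {s : Set (Sym2 V)} {a b : GadgetV V r p}
    (h : ((gadgetGraph G r p sv tv).deleteEdges (Sym2.map Sum.inl '' s)).Reachable a b) :
    (G.deleteEdges s).Reachable (gadgetProj sv tv a) (gadgetProj sv tv b) := by
  refine h.lift _ fun a b hab => ?_
  rw [deleteEdges_adj] at hab
  rcases eq_inl_inl_or_gadgetProj_eq_of_adj hab.1 with ⟨u, w, rfl, rfl⟩ | heq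
  · refine (deleteEdges_adj.2 ⟨adj_inl_inl.1 hab.1, fun hs => hab.2 ?_⟩).reachable
    exact ⟨s(u, w), hs, rfl⟩
  · rw [heq]

theorem reachable_inl {s : Set (Sym2 (GadgetV V r p))} {u w : V}
    (h : (G.deleteEdges (Sym2.map Sum.inl ⁻¹' s)).Reachable u w) :
    ((gadgetGraph G r p sv tv).deleteEdges s).Reachable (.inl u) (.inl w) := by
  refine h.lift _ fun _ _ hadj => ?_
  rw [deleteEdges_adj] at hadj
  exact (deleteEdges_adj.2 ⟨adj_inl_inl.2 hadj.1, hadj.2⟩).reachable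

theorem reachable_terminal_attachment {X : Finset (Sym2 (GadgetV V r p))} (hX : X.card ≤ p)
    (i : Fin r) (c : Bool) :
    ((gadgetGraph G r p sv tv).deleteEdges X).Reachable (.inr (.inl (i, c)))
      (.inl (if c then tv i else sv i)) :=
  reachable_deleteEdges_of_card_lt_commonNeighbors (w := fun j => .inr (.inr (i, c, j)))
    (fun j j' h => by simpa using h) (adj_terminal_middle i c) (adj_middle_attachment i c)
    (by simpa using Nat.lt_succ_of_le hX)

end gadgetGraph

theorem multicut_gadget_equivalence_general
    (G : SimpleGraph V) (r p : ℕ) (sv tv : Fin r → V) :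
    (∃ X : Finset (Sym2 V), ↑X ⊆ G.edgeSet ∧ X.card ≤ p ∧
        ∀ i : Fin r, ¬ (G.deleteEdges ↑X).Reachable (sv i) (tv i)) ↔
    (∃ X' : Finset (Sym2 (GadgetV V r p)),
        ↑X' ⊆ (gadgetGraph G r p sv tv).edgeSet ∧ X'.card ≤ p ∧
        ∀ i : Fin r, ¬ ((gadgetGraph G r p sv tv).deleteEdges ↑X').Reachable
          (Sum.inr (Sum.inl (i, false))) (Sum.inr (Sum.inl (i, true)))) := by
  classical
  have hinl : Injective (Sym2.map (Sum.inl : V → GadgetV V r p)) :=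
    Sym2.map.injective Sum.inl_injective
  constructor
  · rintro ⟨X, hXG, hXp, hcut⟩
    refine ⟨X.image (Sym2.map Sum.inl), ?_, card_image_le.trans hXp, fun i hreach => hcut i ?_⟩
    · rw [coe_image]
      rintro _ ⟨e, he, rfl⟩
      exact gadgetGraph.map_inl_mem_edgeSet.2 (hXG he)
    · rw [coe_image] at hreach
      simpa [gadgetProj] using gadgetGraph.reachable_gadgetProj hreach
  · rintro ⟨X', hX'G, hX'p, hcut⟩
    refine ⟨X'.preimage _ hinl.injOn, fun e he =>
      gadgetGraph.map_inl_mem_edgeSet.1 (hX'G (by simpa using he)),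
      (card_le_card_of_injOn _ (fun e he => mem_preimage.1 he) hinl.injOn).trans hX'p,
      fun i hreach => hcut i ?_⟩
    have hs := gadgetGraph.reachable_terminal_attachment (G := G) (sv := sv) (tv := tv) hX'p i false
    have ht := gadgetGraph.reachable_terminal_attachment (G := G) (sv := sv) (tv := tv) hX'p i true
    rw [coe_preimage] at hreach
    simp only [Bool.false_eq_true, if_false, if_true] at hs ht
    exact hs.trans ((gadgetGraph.reachable_inl hreach).trans ht.symm)

/-- `G` has a multicut of size at most `p` for the requests
`{{s_i,t_i}}` iff the gadget graph `G'` has a multicut of size at most `p` for the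
requests `{{s_i',t_i'}}`. -/
theorem multicut_gadget_equivalence [Fintype V]
    (G : SimpleGraph V) (r p : ℕ) (sv tv : Fin r → V) :
    (∃ X : Finset (Sym2 V), ↑X ⊆ G.edgeSet ∧ X.card ≤ p ∧
        ∀ i : Fin r, ¬ (G.deleteEdges ↑X).Reachable (sv i) (tv i)) ↔
    (∃ X' : Finset (Sym2 (GadgetV V r p)),
        ↑X' ⊆ (gadgetGraph G r p sv tv).edgeSet ∧ X'.card ≤ p ∧
        ∀ i : Fin r, ¬ ((gadgetGraph G r p sv tv).deleteEdges ↑X').Reachable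
          (Sum.inr (Sum.inl (i, false))) (Sum.inr (Sum.inl (i, true)))) :=
  multicut_gadget_equivalence_general G r p sv tv
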